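/- arXiv:2501.00503 — 2 statements merged into one kernel-verified Lean document; each statement's English description precedes it below -/
import Mathlib

section
/- If μ_n is a measure on a set X for every n ∈ ω, then the function φ(A) = limsup_{n→∞} μ_n(A) is a nonpathological submeasure on X. -/
/-!
Every finitely additive measure is monotone and subadditive, so `hat φ`, a supremum of such
measures below `φ`, is always a submeasure below `φ`; it therefore suffices to show
`φ A ≤ hat φ A`. Given `A`, the value `limsup_n μ_n(A)` is a cluster point of `n ↦ μ_n(A)`, hence
its limit along some ultrafilter `U` finer than `atTop`. The `U`-limit of the `μ_n` is finitely
additive (limits along an ultrafilter exist in the compact space `[0, ∞]` and commute with sums),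
lies below the `limsup`, and agrees with it at `A`.
-/

open Filter
open scoped ENNReal

/-- A submeasure on a set (type) `X`. -/
def IsSubmeasure {X : Type*} (φ : Set X → ℝ≥0∞) : Prop :=
  φ ∅ = 0 ∧ (∀ A B : Set X, A ⊆ B → φ A ≤ φ B) ∧ ∀ A B : Set X, φ (A ∪ B) ≤ φ A + φ B

/-- A (finitely additive) measure on `X`. -/
def IsFAMeasure {X : Type*} (μ : Set X → ℝ≥0∞) : Prop :=
  μ ∅ = 0 ∧ ∀ A B : Set X, Disjoint A B → μ (A ∪ B) = μ A + μ B

/-- A σ-measure on `X`: a measure that is countably additive on pairwise disjoint sequences. -/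
def IsSigmaMeasure {X : Type*} (μ : Set X → ℝ≥0∞) : Prop :=
  IsFAMeasure μ ∧ ∀ A : ℕ → Set X, (Pairwise fun m n => Disjoint (A m) (A n)) →
    μ (⋃ n, A n) = ∑' n, μ (A n)

/-- `hat φ A = sup { μ A : μ a measure with μ ≤ φ pointwise }`. -/
noncomputable def hat {X : Type*} (φ : Set X → ℝ≥0∞) (A : Set X) : ℝ≥0∞ :=
  ⨆ (μ : Set X → ℝ≥0∞) (_ : IsFAMeasure μ ∧ ∀ B, μ B ≤ φ B), μ A

/-- `hatSigma φ A = sup { μ A : μ a σ-measure with μ ≤ φ pointwise }`. -/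
noncomputable def hatSigma {X : Type*} (φ : Set X → ℝ≥0∞) (A : Set X) : ℝ≥0∞ :=
  ⨆ (μ : Set X → ℝ≥0∞) (_ : IsSigmaMeasure μ ∧ ∀ B, μ B ≤ φ B), μ A

/-- Lower semicontinuity of a submeasure. -/
def IsLSC {X : Type*} (φ : Set X → ℝ≥0∞) : Prop :=
  ∀ A : Set X, φ A = ⨆ (F : Set X) (_ : F ⊆ A ∧ F.Finite), φ F

/-- The ratio used in the degree of pathology, with the conventions
`∞/∞ = 0/0 = 1`, `a/0 = ∞` and `∞/a = ∞` for positive real `a`. -/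
noncomputable def pratio (a b : ℝ≥0∞) : ℝ≥0∞ :=
  if (a = 0 ∧ b = 0) ∨ (a = ⊤ ∧ b = ⊤) then 1 else a / b

/-- The degree of pathology. -/
noncomputable def degP {X : Type*} (φ : Set X → ℝ≥0∞) : ℝ≥0∞ :=
  ⨆ A : Set X, pratio (φ A) (hat φ A)

/-- The σ-degree of pathology. -/
noncomputable def degPSigma {X : Type*} (φ : Set X → ℝ≥0∞) : ℝ≥0∞ :=
  ⨆ A : Set X, pratio (φ A) (hatSigma φ A)

/-- The Fin-degree of pathology. -/
noncomputable def degPFin {X : Type*} (φ : Set X → ℝ≥0∞) : ℝ≥0∞ :=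
  ⨆ (A : Set X) (_ : A.Finite), pratio (φ A) (hat φ A)

open Topology

section

variable {X : Type*}

namespace IsFAMeasure

variable {ν : Set X → ℝ≥0∞}

lemma mono (hν : IsFAMeasure ν) {A B : Set X} (h : A ⊆ B) : ν A ≤ ν B := by
  rw [← Set.union_sdiff_cancel h, hν.2 A (B \ A) Set.disjoint_sdiff_right]
  exact le_self_add

lemma union_le (hν : IsFAMeasure ν) (A B : Set X) : ν (A ∪ B) ≤ ν A + ν B := by
  rw [← Set.union_sdiff_self, hν.2 A (B \ A) Set.disjoint_sdiff_right]
  exact add_le_add_right (hν.mono Set.sdiff_subset) _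

end IsFAMeasure

section Hat

variable {φ ν : Set X → ℝ≥0∞}

lemma hat_le (φ : Set X → ℝ≥0∞) (A : Set X) : hat φ A ≤ φ A :=
  iSup₂_le fun _ hν => hν.2 A

lemma le_hat_of_le (hν : IsFAMeasure ν) (hνφ : ∀ B, ν B ≤ φ B) (A : Set X) : ν A ≤ hat φ A :=
  le_iSup₂_of_le ν ⟨hν, hνφ⟩ le_rfl

lemma isSubmeasure_hat (φ : Set X → ℝ≥0∞) : IsSubmeasure (hat φ) := by
  refine ⟨?_, fun A B hAB => ?_, fun A B => ?_⟩
  · exact le_antisymm (iSup₂_le fun _ hν => hν.1.1.le) bot_le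
  · exact iSup₂_le fun ν hν => (hν.1.mono hAB).trans (le_hat_of_le hν.1 hν.2 B)
  · exact iSup₂_le fun ν hν => (hν.1.union_le A B).trans <|
      add_le_add (le_hat_of_le hν.1 hν.2 A) (le_hat_of_le hν.1 hν.2 B)

lemma hat_eq_self_of_le (h : ∀ A, φ A ≤ hat φ A) : hat φ = φ :=
  funext fun A => (hat_le φ A).antisymm (h A)

end Hat

lemma Ultrafilter.tendsto_limsup {ι α : Type*} [CompleteLinearOrder α] [TopologicalSpace α]
    [OrderTopology α] (U : Ultrafilter ι) (g : ι → α) :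
    Tendsto g U (𝓝 (limsup g U)) :=
  (U.map g).clusterPt_iff.1 MapClusterPt.limsup

lemma IsFAMeasure.limsup_ultrafilter {ι : Type*} {μ : ι → Set X → ℝ≥0∞}
    (hμ : ∀ i, IsFAMeasure (μ i)) (U : Ultrafilter ι) :
    IsFAMeasure fun B => limsup (fun i => μ i B) U := by
  refine ⟨by simp only [(hμ _).1, limsup_const], fun A B hAB => ?_⟩
  refine tendsto_nhds_unique (U.tendsto_limsup _) ?_
  exact ((U.tendsto_limsup _).add (U.tendsto_limsup _)).congr fun i => ((hμ i).2 A B hAB).symm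

theorem le_hat_limsup {ι : Type*} {μ : ι → Set X → ℝ≥0∞} (hμ : ∀ i, IsFAMeasure (μ i))
    (f : Filter ι) [f.NeBot] (A : Set X) :
    limsup (fun i => μ i A) f ≤ hat (fun B => limsup (fun i => μ i B) f) A := by
  obtain ⟨U, hUf, hUA⟩ :=
    mapClusterPt_iff_ultrafilter.1 (MapClusterPt.limsup (f := f) (u := (μ · A)))
  calc limsup (fun i => μ i A) f = limsup (fun i => μ i A) U := hUA.limsup_eq.symm
    _ ≤ _ := le_hat_of_le (IsFAMeasure.limsup_ultrafilter hμ U)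
      (fun B => limsup_le_limsup_of_le hUf) A

end

/-- If `μ n` is a measure on `X` for every `n ∈ ω`, then
`φ A = limsup_{n → ∞} μ n A` is a nonpathological submeasure on `X`. -/
theorem stmt7 {X : Type*} (μ : ℕ → Set X → ℝ≥0∞) (hμ : ∀ n, IsFAMeasure (μ n)) :
    IsSubmeasure (fun A => Filter.limsup (fun n => μ n A) Filter.atTop) ∧
    ∀ A, hat (fun A => Filter.limsup (fun n => μ n A) Filter.atTop) A =
      Filter.limsup (fun n => μ n A) Filter.atTop := by
  have hat_eq := hat_eq_self_of_le (le_hat_limsup hμ atTop)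
  exact ⟨hat_eq ▸ isSubmeasure_hat _, fun A => congrFun hat_eq A⟩
end

section
/- Let φ and ψ be submeasures on ω and define, on X = {0,1} × ω, (φ ⊕_m ψ)(A) = max{φ(A₀), ψ(A₁)} and (φ ⊕_s ψ)(A) = φ(A₀) + ψ(A₁), where A₀ = {n : (0,n) ∈ A} and A₁ = {n : (1,n) ∈ A}. Then for every C ⊆ X: (1) (φ ⊕_m ψ)̂(C) ≥ max{φ̂(C₀), ψ̂(C₁)}; (2) (φ ⊕_s ψ)̂(C) = φ̂(C₀) + ψ̂(C₁). The same two properties hold with φ̂ and ψ̂ replaced by φ̂_σ and ψ̂_σ respectively. -/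
open Filter
open scoped ENNReal

/-- `(φ ⊕_m ψ)(A) = max (φ A₀) (ψ A₁)` on `{0,1} × ω`. -/
noncomputable def oplusM (φ ψ : Set ℕ → ℝ≥0∞) : Set (Fin 2 × ℕ) → ℝ≥0∞ :=
  fun A => max (φ {n | ((0 : Fin 2), n) ∈ A}) (ψ {n | ((1 : Fin 2), n) ∈ A})

/-- `(φ ⊕_s ψ)(A) = φ A₀ + ψ A₁` on `{0,1} × ω`. -/
noncomputable def oplusS (φ ψ : Set ℕ → ℝ≥0∞) : Set (Fin 2 × ℕ) → ℝ≥0∞ :=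
  fun A => φ {n | ((0 : Fin 2), n) ∈ A} + ψ {n | ((1 : Fin 2), n) ∈ A}

/-!
A measure `m` on `{0,1} × ω` splits as `m = m₀ ⊕_s m₁`, where `mᵢ A = m ({i} × A)`; and since
`φ ∅ = ψ ∅ = 0`, `m ≤ φ ⊕_s ψ` forces `m₀ ≤ φ` and `m₁ ≤ ψ`. Conversely `μ ⊕_s ν` is a measure
below `φ ⊕_s ψ` whenever `μ ≤ φ` and `ν ≤ ψ`. Taking suprema gives (2). Since `φ ⊕_s 0` and
`0 ⊕_s ψ` lie below `φ ⊕_m ψ`, (1) follows from (2) and monotonicity of `φ ↦ φ̂`. Countable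
additivity survives all these constructions, so the σ-versions are proved the same way.
-/

open Function Set

namespace IsFAMeasure

variable {X Y : Type*} {μ ν : Set X → ℝ≥0∞}

theorem zero : IsFAMeasure (0 : Set X → ℝ≥0∞) :=
  ⟨rfl, fun _ _ _ => (add_zero 0).symm⟩

theorem add (hμ : IsFAMeasure μ) (hν : IsFAMeasure ν) : IsFAMeasure fun A => μ A + ν A :=
  ⟨by simp only [hμ.1, hν.1, add_zero], fun A B h => by
    dsimp only; rw [hμ.2 A B h, hν.2 A B h]; ring⟩

theorem comp_preimage (hμ : IsFAMeasure μ) (f : X → Y) : IsFAMeasure fun A => μ (f ⁻¹' A) :=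
  ⟨by simp only [preimage_empty, hμ.1], fun A B h => by
    dsimp only; rw [preimage_union, hμ.2 _ _ (h.preimage f)]⟩

theorem comp_image (hμ : IsFAMeasure μ) {f : Y → X} (hf : Injective f) :
    IsFAMeasure fun A => μ (f '' A) :=
  ⟨by simp only [image_empty, hμ.1], fun A B h => by
    dsimp only; rw [image_union, hμ.2 _ _ ((disjoint_image_iff hf).2 h)]⟩

end IsFAMeasure

namespace IsSigmaMeasure

variable {X Y : Type*} {μ ν : Set X → ℝ≥0∞}

theorem zero : IsSigmaMeasure (0 : Set X → ℝ≥0∞) :=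
  ⟨IsFAMeasure.zero, fun _ _ => by simp⟩

theorem add (hμ : IsSigmaMeasure μ) (hν : IsSigmaMeasure ν) : IsSigmaMeasure fun A => μ A + ν A :=
  ⟨hμ.1.add hν.1, fun A hA => by dsimp only; rw [hμ.2 A hA, hν.2 A hA, ENNReal.tsum_add]⟩

theorem comp_preimage (hμ : IsSigmaMeasure μ) (f : X → Y) :
    IsSigmaMeasure fun A => μ (f ⁻¹' A) :=
  ⟨hμ.1.comp_preimage f, fun A hA => by
    dsimp only; rw [preimage_iUnion, hμ.2 _ fun m n hmn => (hA hmn).preimage f]⟩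

theorem comp_image (hμ : IsSigmaMeasure μ) {f : Y → X} (hf : Injective f) :
    IsSigmaMeasure fun A => μ (f '' A) :=
  ⟨hμ.1.comp_image hf, fun A hA => by
    dsimp only; rw [image_iUnion, hμ.2 _ fun m n hmn => (disjoint_image_iff hf).2 (hA hmn)]⟩

end IsSigmaMeasure

section OplusS

variable {φ ψ μ ν : Set ℕ → ℝ≥0∞}

theorem IsFAMeasure.oplusS_comp_image_mk {m : Set (Fin 2 × ℕ) → ℝ≥0∞} (hm : IsFAMeasure m) :
    oplusS (fun A => m (Prod.mk 0 '' A)) (fun A => m (Prod.mk 1 '' A)) = m := by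
  funext C
  have hdisj :
      Disjoint (Prod.mk 0 '' (Prod.mk 0 ⁻¹' C)) (Prod.mk (1 : Fin 2) '' (Prod.mk 1 ⁻¹' C)) :=
    disjoint_left.2 <| by simp
  refine (hm.2 _ _ hdisj).symm.trans (congrArg m ?_)
  ext ⟨i, n⟩
  fin_cases i <;> simp

theorem IsFAMeasure.oplusS (hμ : IsFAMeasure μ) (hν : IsFAMeasure ν) :
    IsFAMeasure (oplusS μ ν) :=
  (hμ.comp_preimage (Prod.mk 0)).add (hν.comp_preimage (Prod.mk 1))

theorem IsSigmaMeasure.oplusS (hμ : IsSigmaMeasure μ) (hν : IsSigmaMeasure ν) :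
    IsSigmaMeasure (oplusS μ ν) :=
  (hμ.comp_preimage (Prod.mk 0)).add (hν.comp_preimage (Prod.mk 1))

theorem oplusS_image_mk_zero (hψ : ψ ∅ = 0) (A : Set ℕ) : oplusS φ ψ (Prod.mk 0 '' A) = φ A := by
  simp [oplusS, hψ]

theorem oplusS_image_mk_one (hφ : φ ∅ = 0) (A : Set ℕ) : oplusS φ ψ (Prod.mk 1 '' A) = ψ A := by
  simp [oplusS, hφ]

theorem oplusS_le_oplusS (hμ : ∀ B, μ B ≤ φ B) (hν : ∀ B, ν B ≤ ψ B) (B : Set (Fin 2 × ℕ)) :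
    oplusS μ ν B ≤ oplusS φ ψ B :=
  add_le_add (hμ _) (hν _)

theorem oplusS_zero_right_le_oplusM (B : Set (Fin 2 × ℕ)) : oplusS φ 0 B ≤ oplusM φ ψ B :=
  (add_zero _).trans_le (le_max_left _ _)

theorem oplusS_zero_left_le_oplusM (B : Set (Fin 2 × ℕ)) : oplusS 0 ψ B ≤ oplusM φ ψ B :=
  (zero_add _).trans_le (le_max_right _ _)

end OplusS

section Hat

variable {X : Type*} {φ φ' μ : Set X → ℝ≥0∞} {A : Set X} {c : ℝ≥0∞}

theorem le_hat (hμ : IsFAMeasure μ) (hle : ∀ B, μ B ≤ φ B) (A : Set X) : μ A ≤ hat φ A :=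
  le_iSup₂_of_le μ ⟨hμ, hle⟩ le_rfl

theorem hat_le_s9 (h : ∀ μ, IsFAMeasure μ → (∀ B, μ B ≤ φ B) → μ A ≤ c) : hat φ A ≤ c :=
  iSup₂_le fun μ hμ => h μ hμ.1 hμ.2

theorem hat_mono (h : ∀ B, φ B ≤ φ' B) (A : Set X) : hat φ A ≤ hat φ' A :=
  hat_le_s9 fun _ hμ hle => le_hat hμ (fun B => (hle B).trans (h B)) A

theorem le_hatSigma (hμ : IsSigmaMeasure μ) (hle : ∀ B, μ B ≤ φ B) (A : Set X) :
    μ A ≤ hatSigma φ A :=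
  le_iSup₂_of_le μ ⟨hμ, hle⟩ le_rfl

theorem hatSigma_le (h : ∀ μ, IsSigmaMeasure μ → (∀ B, μ B ≤ φ B) → μ A ≤ c) :
    hatSigma φ A ≤ c :=
  iSup₂_le fun μ hμ => h μ hμ.1 hμ.2

theorem hatSigma_mono (h : ∀ B, φ B ≤ φ' B) (A : Set X) : hatSigma φ A ≤ hatSigma φ' A :=
  hatSigma_le fun _ hμ hle => le_hatSigma hμ (fun B => (hle B).trans (h B)) A

end Hat

section HatOplus

variable {φ ψ : Set ℕ → ℝ≥0∞}

theorem hat_oplusS (hφ : φ ∅ = 0) (hψ : ψ ∅ = 0) (C : Set (Fin 2 × ℕ)) :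
    hat (oplusS φ ψ) C = hat φ (Prod.mk 0 ⁻¹' C) + hat ψ (Prod.mk 1 ⁻¹' C) := by
  refine le_antisymm (hat_le_s9 fun m hm hle => ?_) ?_
  · rw [← congrFun hm.oplusS_comp_image_mk C]
    exact add_le_add
      (le_hat (hm.comp_image (Prod.mk_right_injective 0))
        (fun B => (hle _).trans_eq (oplusS_image_mk_zero hψ B)) _)
      (le_hat (hm.comp_image (Prod.mk_right_injective 1))
        (fun B => (hle _).trans_eq (oplusS_image_mk_one hφ B)) _)
  · exact ENNReal.biSup_add_biSup_le' ⟨0, IsFAMeasure.zero, fun _ => zero_le⟩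
      ⟨0, IsFAMeasure.zero, fun _ => zero_le⟩
      fun μ hμ ν hν => le_hat (hμ.1.oplusS hν.1) (oplusS_le_oplusS hμ.2 hν.2) C

theorem hatSigma_oplusS (hφ : φ ∅ = 0) (hψ : ψ ∅ = 0) (C : Set (Fin 2 × ℕ)) :
    hatSigma (oplusS φ ψ) C = hatSigma φ (Prod.mk 0 ⁻¹' C) + hatSigma ψ (Prod.mk 1 ⁻¹' C) := by
  refine le_antisymm (hatSigma_le fun m hm hle => ?_) ?_
  · rw [← congrFun hm.1.oplusS_comp_image_mk C]
    exact add_le_add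
      (le_hatSigma (hm.comp_image (Prod.mk_right_injective 0))
        (fun B => (hle _).trans_eq (oplusS_image_mk_zero hψ B)) _)
      (le_hatSigma (hm.comp_image (Prod.mk_right_injective 1))
        (fun B => (hle _).trans_eq (oplusS_image_mk_one hφ B)) _)
  · exact ENNReal.biSup_add_biSup_le' ⟨0, IsSigmaMeasure.zero, fun _ => zero_le⟩
      ⟨0, IsSigmaMeasure.zero, fun _ => zero_le⟩
      fun μ hμ ν hν => le_hatSigma (hμ.1.oplusS hν.1) (oplusS_le_oplusS hμ.2 hν.2) C

theorem max_hat_le_hat_oplusM (hφ : φ ∅ = 0) (hψ : ψ ∅ = 0) (C : Set (Fin 2 × ℕ)) :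
    max (hat φ (Prod.mk 0 ⁻¹' C)) (hat ψ (Prod.mk 1 ⁻¹' C)) ≤ hat (oplusM φ ψ) C := by
  refine max_le ?_ ?_
  · calc hat φ (Prod.mk 0 ⁻¹' C) ≤ hat (oplusS φ 0) C := by
          rw [hat_oplusS hφ rfl]; exact le_self_add
      _ ≤ hat (oplusM φ ψ) C := hat_mono oplusS_zero_right_le_oplusM C
  · calc hat ψ (Prod.mk 1 ⁻¹' C) ≤ hat (oplusS 0 ψ) C := by
          rw [hat_oplusS rfl hψ]; exact le_add_self
      _ ≤ hat (oplusM φ ψ) C := hat_mono oplusS_zero_left_le_oplusM C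

theorem max_hatSigma_le_hatSigma_oplusM (hφ : φ ∅ = 0) (hψ : ψ ∅ = 0) (C : Set (Fin 2 × ℕ)) :
    max (hatSigma φ (Prod.mk 0 ⁻¹' C)) (hatSigma ψ (Prod.mk 1 ⁻¹' C)) ≤
      hatSigma (oplusM φ ψ) C := by
  refine max_le ?_ ?_
  · calc hatSigma φ (Prod.mk 0 ⁻¹' C) ≤ hatSigma (oplusS φ 0) C := by
          rw [hatSigma_oplusS hφ rfl]; exact le_self_add
      _ ≤ hatSigma (oplusM φ ψ) C := hatSigma_mono oplusS_zero_right_le_oplusM C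
  · calc hatSigma ψ (Prod.mk 1 ⁻¹' C) ≤ hatSigma (oplusS 0 ψ) C := by
          rw [hatSigma_oplusS rfl hψ]; exact le_add_self
      _ ≤ hatSigma (oplusM φ ψ) C := hatSigma_mono oplusS_zero_left_le_oplusM C

end HatOplus

/-- For submeasures `φ, ψ` on `ω` and every `C ⊆ {0,1} × ω`:
`(φ ⊕_m ψ)̂ C ≥ max (φ̂ C₀) (ψ̂ C₁)` and `(φ ⊕_s ψ)̂ C = φ̂ C₀ + ψ̂ C₁`, and the same
holds for the σ-versions. -/
theorem stmt9 (φ ψ : Set ℕ → ℝ≥0∞) (hφ : IsSubmeasure φ) (hψ : IsSubmeasure ψ) :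
    ∀ C : Set (Fin 2 × ℕ),
      hat (oplusM φ ψ) C ≥
        max (hat φ {n | ((0 : Fin 2), n) ∈ C}) (hat ψ {n | ((1 : Fin 2), n) ∈ C}) ∧
      hat (oplusS φ ψ) C =
        hat φ {n | ((0 : Fin 2), n) ∈ C} + hat ψ {n | ((1 : Fin 2), n) ∈ C} ∧
      hatSigma (oplusM φ ψ) C ≥
        max (hatSigma φ {n | ((0 : Fin 2), n) ∈ C}) (hatSigma ψ {n | ((1 : Fin 2), n) ∈ C}) ∧
      hatSigma (oplusS φ ψ) C =
        hatSigma φ {n | ((0 : Fin 2), n) ∈ C} + hatSigma ψ {n | ((1 : Fin 2), n) ∈ C} := by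
  intro C
  exact ⟨max_hat_le_hat_oplusM hφ.1 hψ.1 C, hat_oplusS hφ.1 hψ.1 C,
    max_hatSigma_le_hatSigma_oplusM hφ.1 hψ.1 C, hatSigma_oplusS hφ.1 hψ.1 C⟩
end
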